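/- Let M be the HRQF matrix of an STBC with weight matrices A_1,...,A_K, i.e., m_{ij} = ‖A_i A_j^H + A_j A_i^H‖_F². Then m_{ij} = 0 if and only if the columns h_i and h_j of H_eq are orthogonal for every channel realization H; in particular, the zero pattern of the strictly upper-triangular part of M does not depend on H. -/

import Mathlib

/-!
Column `k` of `H_eq` is the realification of `H A_k`, so `⟨h_i, h_j⟩ = Re tr (H A_i A_jᴴ Hᴴ)`;
symmetrising in `i, j` gives `2 ⟨h_i, h_j⟩ = Re tr (H S Hᴴ)` for the Hermitian matrix
`S = A_i A_jᴴ + A_j A_iᴴ`, whose squared Frobenius norm is `m_{ij}`. A channel whose rows all equal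
`xᴴ` turns this trace into `n_r · xᴴ S x`, and a Hermitian form vanishing for every `x` is zero.
-/

open Matrix Finset Kronecker

/-- The realification `Ȟ` of a complex channel matrix `H`. -/
def checkMat {nr n : ℕ} (H : Matrix (Fin nr) (Fin n) ℂ) :
    Matrix (Fin nr × Fin 2) (Fin n × Fin 2) ℝ := fun p q =>
  if p.2 = 0 then (if q.2 = 0 then (H p.1 q.1).re else -(H p.1 q.1).im)
  else (if q.2 = 0 then (H p.1 q.1).im else (H p.1 q.1).re)

/-- The generator matrix `G`: its `k`-th column is the realified vectorization of `A_k`. -/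
def genMat {n K : ℕ} (A : Fin K → Matrix (Fin n) (Fin n) ℂ) :
    Matrix (Fin n × Fin n × Fin 2) (Fin K) ℝ := fun idx k =>
  if idx.2.2 = 0 then (A k idx.2.1 idx.1).re else (A k idx.2.1 idx.1).im

/-- The equivalent real channel matrix `H_eq = (I_n ⊗ Ȟ)·G`. -/
def heqMat {nr n K : ℕ} (H : Matrix (Fin nr) (Fin n) ℂ)
    (A : Fin K → Matrix (Fin n) (Fin n) ℂ) :
    Matrix (Fin n × (Fin nr × Fin 2)) (Fin K) ℝ :=
  ((1 : Matrix (Fin n) (Fin n) ℝ) ⊗ₖ checkMat H) * genMat A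

namespace Matrix

theorem trace_replicateRow_mul_mul_replicateCol {α ι n : Type*} [NonUnitalSemiring α]
    [Fintype ι] [Fintype n] (v w : n → α) (S : Matrix n n α) :
    trace (replicateRow ι v * S * replicateCol ι w) = Fintype.card ι • (v ⬝ᵥ S *ᵥ w) := by
  rw [Matrix.mul_assoc, ← replicateCol_mulVec]
  simp [trace]

theorem re_trace_mul_conjTranspose {m n : Type*} [Fintype m] [Fintype n] (B C : Matrix m n ℂ) :
    (trace (B * Cᴴ)).re = ∑ r, ∑ c, ((B r c).re * (C r c).re + (B r c).im * (C r c).im) := by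
  simp only [trace, diag, mul_apply, conjTranspose_apply, Complex.re_sum, Complex.mul_re,
    Complex.star_def, Complex.conj_re, Complex.conj_im]
  exact Finset.sum_congr rfl fun r _ => Finset.sum_congr rfl fun c _ => by ring

theorem sum_sum_normSq_eq_zero_iff {m n : Type*} [Fintype m] [Fintype n] (S : Matrix m n ℂ) :
    ∑ a, ∑ b, Complex.normSq (S a b) = 0 ↔ S = 0 := by
  rw [← Matrix.ext_iff, Finset.sum_eq_zero_iff_of_nonneg fun a _ =>
    Finset.sum_nonneg fun b _ => Complex.normSq_nonneg (S a b)]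
  simp [Finset.sum_eq_zero_iff_of_nonneg, Complex.normSq_nonneg]

theorem isHermitian_mul_conjTranspose_add {𝕜 m n : Type*} [RCLike 𝕜] [Fintype n]
    (B C : Matrix m n 𝕜) : (B * Cᴴ + C * Bᴴ).IsHermitian := by
  simp [IsHermitian, conjTranspose_add, conjTranspose_mul, add_comm]

theorem IsHermitian.eq_zero_of_forall_re_dotProduct_mulVec_self {𝕜 n : Type*} [RCLike 𝕜]
    [Fintype n] {S : Matrix n n 𝕜} (hS : S.IsHermitian)
    (h : ∀ x, RCLike.re (star x ⬝ᵥ S *ᵥ x) = 0) : S = 0 := by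
  classical
  have hT := isSymmetric_toEuclideanLin_iff.mpr hS
  have hform (x : n → 𝕜) : star x ⬝ᵥ S *ᵥ x = 0 :=
    RCLike.ext (by simpa using h x) (by simpa using hS.im_star_dotProduct_mulVec_self x)
  refine toEuclideanLin.map_eq_zero_iff.mp (hT.inner_map_self_eq_zero.mp fun x => ?_)
  rw [hT, EuclideanSpace.inner_eq_star_dotProduct, dotProduct_comm]
  exact hform _

theorem IsHermitian.forall_re_trace_mul_mul_conjTranspose_eq_zero_iff {𝕜 ι n : Type*}
    [RCLike 𝕜] [Fintype ι] [Nonempty ι] [Fintype n] {S : Matrix n n 𝕜} (hS : S.IsHermitian) :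
    (∀ H : Matrix ι n 𝕜, RCLike.re (trace (H * S * Hᴴ)) = 0) ↔ S = 0 := by
  refine ⟨fun h => hS.eq_zero_of_forall_re_dotProduct_mulVec_self fun x => ?_,
    fun hS0 H => by simp [hS0]⟩
  simpa [trace_replicateRow_mul_mul_replicateCol] using h (replicateRow ι (star x))

end Matrix

theorem heqMat_apply {nr n K : ℕ} (H : Matrix (Fin nr) (Fin n) ℂ)
    (A : Fin K → Matrix (Fin n) (Fin n) ℂ) (c : Fin n) (r : Fin nr) (s : Fin 2) (k : Fin K) :
    heqMat H A (c, (r, s)) k = if s = 0 then ((H * A k) r c).re else ((H * A k) r c).im := by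
  simp only [heqMat, mul_apply, Fintype.sum_prod_type, kroneckerMap_apply, one_apply,
    checkMat, genMat, Complex.re_sum, Complex.im_sum, Fin.sum_univ_two, ite_mul, zero_mul,
    one_mul]
  rw [Finset.sum_comm]
  fin_cases s <;>
    simp [Complex.mul_re, Complex.mul_im, Finset.sum_add_distrib, sub_eq_add_neg, add_comm]

theorem sum_heqMat_mul_heqMat {nr n K : ℕ} (H : Matrix (Fin nr) (Fin n) ℂ)
    (A : Fin K → Matrix (Fin n) (Fin n) ℂ) (i j : Fin K) :
    ∑ idx, heqMat H A idx i * heqMat H A idx j = (trace (H * A i * (H * A j)ᴴ)).re := by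
  rw [re_trace_mul_conjTranspose, Finset.sum_comm]
  simp [Fintype.sum_prod_type, Fin.sum_univ_two, heqMat_apply]

theorem two_mul_sum_heqMat_mul_heqMat {nr n K : ℕ} (H : Matrix (Fin nr) (Fin n) ℂ)
    (A : Fin K → Matrix (Fin n) (Fin n) ℂ) (i j : Fin K) :
    2 * ∑ idx, heqMat H A idx i * heqMat H A idx j =
      (trace (H * (A i * (A j)ᴴ + A j * (A i)ᴴ) * Hᴴ)).re := by
  have hswap : ∑ idx, heqMat H A idx i * heqMat H A idx j =
      ∑ idx, heqMat H A idx j * heqMat H A idx i := by simp only [mul_comm]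
  have hsplit : (trace (H * (A i * (A j)ᴴ + A j * (A i)ᴴ) * Hᴴ)).re =
      (trace (H * A i * (H * A j)ᴴ)).re + (trace (H * A j * (H * A i)ᴴ)).re := by
    simp only [conjTranspose_mul, Matrix.mul_add, Matrix.add_mul, trace_add, Complex.add_re,
      Matrix.mul_assoc]
  linarith [sum_heqMat_mul_heqMat H A i j, sum_heqMat_mul_heqMat H A j i]

/-- The HRQF entry `m_{ij} = ‖A_i A_j^H + A_j A_i^H‖_F²` vanishes iff the columns `h_i`
and `h_j` of `H_eq` are orthogonal for every channel realization `H`; in particular the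
zero pattern of the HRQF matrix does not depend on the channel. -/
theorem hrqf_zero_iff_columns_orthogonal {nr n K : ℕ} (hnr : 0 < nr)
    (A : Fin K → Matrix (Fin n) (Fin n) ℂ) (i j : Fin K)
    (m : Fin K → Fin K → ℝ)
    (hm : ∀ i j, m i j =
      ∑ a, ∑ b, Complex.normSq ((A i * (A j)ᴴ + A j * (A i)ᴴ) a b)) :
    m i j = 0 ↔
      ∀ H : Matrix (Fin nr) (Fin n) ℂ,
        ∑ idx, heqMat H A idx i * heqMat H A idx j = 0 := by
  have : Nonempty (Fin nr) := ⟨⟨0, hnr⟩⟩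
  have hcol (H : Matrix (Fin nr) (Fin n) ℂ) :
      ∑ idx, heqMat H A idx i * heqMat H A idx j = 0 ↔
        (trace (H * (A i * (A j)ᴴ + A j * (A i)ᴴ) * Hᴴ)).re = 0 := by
    rw [← two_mul_sum_heqMat_mul_heqMat, mul_eq_zero_iff_left two_ne_zero]
  simp only [hcol, hm, sum_sum_normSq_eq_zero_iff]
  exact (isHermitian_mul_conjTranspose_add (A i) (A j)
    |>.forall_re_trace_mul_mul_conjTranspose_eq_zero_iff).symm
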